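/- arXiv:2211.10912 — 2 statements merged into one kernel-verified Lean document; each statement's English description precedes it below -/
import Mathlib

section
/- If f: ℤⁿ → ℝ ∪ {+∞} is an integrally convex function that attains a finite minimum, then argmin f is an integrally convex set. -/
noncomputable section

def coeZR {n : ℕ} (z : Fin n → ℤ) : Fin n → ℝ := fun i => (z i : ℝ)

def IntNbhd {n : ℕ} (x : Fin n → ℝ) : Set (Fin n → ℤ) :=
  {z | ∀ i, |x i - (z i : ℝ)| < 1}

def IntegrallyConvexSet {n : ℕ} (S : Set (Fin n → ℤ)) : Prop :=
  ∀ x ∈ convexHull ℝ (coeZR '' S), x ∈ convexHull ℝ (coeZR '' (S ∩ IntNbhd x))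
def localConvexExt {n : ℕ} (f : (Fin n → ℤ) → EReal) (x : Fin n → ℝ) : EReal :=
  sInf { v : EReal | ∃ l : (Fin n → ℤ) →₀ ℝ,
    (∀ z, 0 ≤ l z) ∧ (∀ z ∈ l.support, z ∈ IntNbhd x) ∧
    (l.sum fun _ a => a) = 1 ∧
    (l.sum fun z a => a • coeZR z) = x ∧
    v = l.sum fun z a => (a : EReal) * f z }

def ERealConvexOn {n : ℕ} (g : (Fin n → ℝ) → EReal) : Prop :=
  ∀ x y : Fin n → ℝ, ∀ a b : ℝ, 0 ≤ a → 0 ≤ b → a + b = 1 →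
    g (a • x + b • y) ≤ (a : EReal) * g x + (b : EReal) * g y

def IntegrallyConvexFn {n : ℕ} (f : (Fin n → ℤ) → EReal) : Prop :=
  ERealConvexOn (localConvexExt f)

/-!
Let `m` be the minimum of `f`. The local convex extension `f̃` agrees with `f` at lattice points
and its sublevel sets are convex, so `f̃ ≤ m` on the convex hull of the minimizers. At such a
point `x`, `f̃ x` is the minimum of a linear function over the compact polytope of convex
combinations of the finitely many points of `N(x)` with barycenter `x`, so it is attained. A
combination of values `≥ m` whose value is `≤ m` only charges points where `f = m`; these are
minimizers in `N(x)`, and they have `x` in their convex hull.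
-/

open Finset

namespace EReal

lemma coe_finset_sum {α : Type*} (s : Finset α) (g : α → ℝ) :
    ((∑ i ∈ s, g i : ℝ) : EReal) = ∑ i ∈ s, (g i : EReal) :=
  map_sum (⟨⟨Real.toEReal, coe_zero⟩, coe_add⟩ : ℝ →+ EReal) g s

lemma sum_eq_top_of_mem {α : Type*} {s : Finset α} {g : α → EReal} (hbot : ∀ j ∈ s, g j ≠ ⊥)
    {i : α} (hi : i ∈ s) (htop : g i = ⊤) : ∑ j ∈ s, g j = ⊤ := by
  classical
  have hrest : ∑ j ∈ s.erase i, g j ≠ ⊥ :=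
    sum_induction _ (· ≠ ⊥) (fun _ _ ha hb => add_ne_bot_iff.2 ⟨ha, hb⟩) zero_ne_bot
      fun j hj => hbot j (mem_of_mem_erase hj)
  rw [← add_sum_erase s g hi, htop, top_add_of_ne_bot hrest]

end EReal

section ConvexWeights

variable {α E : Type*} [TopologicalSpace E] [AddCommMonoid E] [Module ℝ E]

def convexWeights (s : Finset α) (p : α → E) (x : E) : Set (α → ℝ) :=
  {w | (∀ i, 0 ≤ w i) ∧ (∀ i ∉ s, w i = 0) ∧ ∑ i ∈ s, w i = 1 ∧ ∑ i ∈ s, w i • p i = x}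

lemma isCompact_convexWeights [ContinuousAdd E] [ContinuousSMul ℝ E] [T2Space E]
    (s : Finset α) (p : α → E) (x : E) : IsCompact (convexWeights s p x) := by
  have hsub : convexWeights s p x ⊆ Set.univ.pi fun _ => Set.Icc 0 1 := by
    rintro w ⟨hw0, hws, hw1, -⟩ i -
    refine ⟨hw0 i, ?_⟩
    by_cases hi : i ∈ s
    · exact hw1 ▸ single_le_sum (fun j _ => hw0 j) hi
    · exact (hws i hi).trans_le zero_le_one
  have hclosed : IsClosed (convexWeights s p x) := by
    simp only [convexWeights, Set.ofPred_and, Set.ofPred_forall]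
    refine (isClosed_iInter fun i => isClosed_le ?_ ?_).inter
      ((isClosed_iInter fun i => isClosed_iInter fun _ => isClosed_eq ?_ ?_).inter
      ((isClosed_eq ?_ ?_).inter (isClosed_eq ?_ ?_))) <;> fun_prop
  exact (isCompact_univ_pi fun _ => isCompact_Icc).of_isClosed_subset hclosed hsub

end ConvexWeights

section LocalConvexExt

variable {n : ℕ} {f : (Fin n → ℤ) → EReal} {x : Fin n → ℝ} {l : (Fin n → ℤ) →₀ ℝ}

def IsLocalCombination (x : Fin n → ℝ) (l : (Fin n → ℤ) →₀ ℝ) : Prop :=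
  (∀ z, 0 ≤ l z) ∧ (∀ z ∈ l.support, z ∈ IntNbhd x) ∧
    (l.sum fun _ a => a) = 1 ∧ (l.sum fun z a => a • coeZR z) = x

def weightedValue (f : (Fin n → ℤ) → EReal) (l : (Fin n → ℤ) →₀ ℝ) : EReal :=
  l.sum fun z a => (a : EReal) * f z

lemma localConvexExt_eq_sInf (f : (Fin n → ℤ) → EReal) (x : Fin n → ℝ) :
    localConvexExt f x = sInf {v | ∃ l, IsLocalCombination x l ∧ v = weightedValue f l} := by
  simp only [localConvexExt, IsLocalCombination, weightedValue, and_assoc]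

lemma finite_intNbhd (x : Fin n → ℝ) : (IntNbhd x).Finite := by
  refine (Set.Finite.pi' fun i => Set.finite_Icc (⌈x i⌉ - 1) (⌊x i⌋ + 1)).subset fun z hz i => ?_
  obtain ⟨hlo, hhi⟩ := abs_lt.1 (hz i)
  have hceil : ⌈x i⌉ ≤ z i + 1 := Int.ceil_le.2 (by push_cast; linarith)
  have hfloor : z i - 1 ≤ ⌊x i⌋ := Int.le_floor.2 (by push_cast; linarith)
  constructor <;> omega

lemma isLocalCombination_single (z : Fin n → ℤ) :
    IsLocalCombination (coeZR z) (Finsupp.single z 1) := by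
  refine ⟨fun w => ?_, fun w hw => ?_, ?_, ?_⟩
  · rw [Finsupp.single_apply]; split_ifs <;> norm_num
  · rw [mem_singleton.1 (Finsupp.support_single_subset hw)]
    intro i; simp [coeZR]
  · simp [Finsupp.sum_single_index]
  · simp [Finsupp.sum_single_index]

lemma localConvexExt_coeZR_le (f : (Fin n → ℤ) → EReal) (z : Fin n → ℤ) :
    localConvexExt f (coeZR z) ≤ f z := by
  rw [localConvexExt_eq_sInf]
  refine sInf_le ⟨_, isLocalCombination_single z, ?_⟩
  simp [weightedValue]

lemma ERealConvexOn.convex_setOf_le_coe {g : (Fin n → ℝ) → EReal} (hg : ERealConvexOn g)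
    (m : ℝ) : Convex ℝ {y | g y ≤ m} := by
  intro p hp q hq a b ha hb hab
  calc g (a • p + b • q) ≤ (a : EReal) * g p + (b : EReal) * g q := hg p q a b ha hb hab
    _ ≤ (a : EReal) * m + (b : EReal) * m :=
      add_le_add (mul_le_mul_of_nonneg_left hp (EReal.coe_nonneg.2 ha))
        (mul_le_mul_of_nonneg_left hq (EReal.coe_nonneg.2 hb))
    _ = m := by rw [← EReal.coe_mul, ← EReal.coe_mul, ← EReal.coe_add, ← add_mul, hab, one_mul]

lemma IsLocalCombination.mem_convexHull (hl : IsLocalCombination x l) {S : Set (Fin n → ℤ)}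
    (hS : ∀ z ∈ l.support, z ∈ S) :
    x ∈ convexHull ℝ (coeZR '' (S ∩ IntNbhd x)) := by
  obtain ⟨h0, hN, h1, hx⟩ := hl
  have hmem : (l.sum fun z a => a • coeZR z) ∈ convexHull ℝ (coeZR '' (S ∩ IntNbhd x)) :=
    (convex_convexHull ℝ _).sum_mem (fun z _ => h0 z) h1 fun z hz =>
      subset_convexHull ℝ _ ⟨z, ⟨hS z hz, hN z hz⟩, rfl⟩
  rwa [hx] at hmem

lemma IsLocalCombination.ne_top_of_mem_support (hbot : ∀ z, f z ≠ ⊥)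
    (hl : IsLocalCombination x l) (hv : weightedValue f l ≠ ⊤) : ∀ z ∈ l.support, f z ≠ ⊤ := by
  intro z hz htop
  refine hv (EReal.sum_eq_top_of_mem (fun w _ => ?_) hz ?_)
  · exact (EReal.mul_ne_bot _ _).2 ⟨Or.inl (EReal.coe_ne_bot _), Or.inr (hbot w),
      Or.inl (EReal.coe_ne_top _), Or.inl (EReal.coe_nonneg.2 (hl.1 w))⟩
  · show (l z : EReal) * f z = ⊤
    rw [htop]
    exact EReal.coe_mul_top_of_pos ((hl.1 z).lt_of_ne' (Finsupp.mem_support_iff.1 hz))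

lemma weightedValue_eq_coe_sum (hbot : ∀ z, f z ≠ ⊥) {T : Finset (Fin n → ℤ)}
    (hT : ∀ z ∈ T, f z ≠ ⊤) (hl : l.support ⊆ T) :
    weightedValue f l = ↑(∑ z ∈ T, l z * (f z).toReal) := by
  rw [weightedValue, Finsupp.sum_of_support_subset l hl _ (fun _ _ => by simp),
    EReal.coe_finset_sum]
  refine sum_congr rfl fun z hz => ?_
  rw [EReal.coe_mul, EReal.coe_toReal (hT z hz) (hbot z)]

lemma isLocalCombination_iff_mem_convexWeights {T : Finset (Fin n → ℤ)}
    (hT : ∀ z ∈ T, z ∈ IntNbhd x) (hl : l.support ⊆ T) :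
    IsLocalCombination x l ↔ ⇑l ∈ convexWeights T coeZR x := by
  have hzero : ∀ z ∉ T, l z = 0 := fun z hz => Finsupp.notMem_support_iff.1 fun h => hz (hl h)
  have hsum : (l.sum fun _ a => a) = ∑ z ∈ T, l z :=
    Finsupp.sum_of_support_subset l hl _ fun _ _ => rfl
  have hsum_smul : (l.sum fun z a => a • coeZR z) = ∑ z ∈ T, l z • coeZR z :=
    Finsupp.sum_of_support_subset l hl _ fun _ _ => zero_smul ℝ _
  rw [IsLocalCombination, hsum, hsum_smul]
  exact ⟨fun ⟨h0, _, h1, hx⟩ => ⟨h0, hzero, h1, hx⟩,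
    fun ⟨h0, _, h1, hx⟩ => ⟨h0, fun z hz => hT z (hl hz), h1, hx⟩⟩

theorem exists_isLocalCombination_weightedValue_eq (hbot : ∀ z, f z ≠ ⊥)
    (hx : localConvexExt f x ≠ ⊤) :
    ∃ l, IsLocalCombination x l ∧ weightedValue f l = localConvexExt f x := by
  classical
  let T : Finset (Fin n → ℤ) :=
    ((finite_intNbhd x).subset fun z (hz : z ∈ IntNbhd x ∧ f z ≠ ⊤) => hz.1).toFinset
  have hT : ∀ {z}, z ∈ T ↔ z ∈ IntNbhd x ∧ f z ≠ ⊤ := Set.Finite.mem_toFinset _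
  let g : ((Fin n → ℤ) → ℝ) → ℝ := fun w => ∑ z ∈ T, w z * (f z).toReal
  have hsupp : ∀ l, IsLocalCombination x l → weightedValue f l ≠ ⊤ → l.support ⊆ T :=
    fun l hl hv z hz => hT.2 ⟨hl.2.1 z hz, hl.ne_top_of_mem_support hbot hv z hz⟩
  have hK : ∀ l, l.support ⊆ T → (IsLocalCombination x l ↔ ⇑l ∈ convexWeights T coeZR x) :=
    fun l => isLocalCombination_iff_mem_convexWeights fun z hz => (hT.1 hz).1
  have hval : ∀ l, l.support ⊆ T → weightedValue f l = g l :=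
    fun l => weightedValue_eq_coe_sum hbot fun z hz => (hT.1 hz).2
  obtain ⟨_, ⟨l₀, hl₀, rfl⟩, hl₀top⟩ := sInf_lt_iff.1 (localConvexExt_eq_sInf f x ▸ hx.lt_top)
  obtain ⟨w, hw, hmin⟩ := (isCompact_convexWeights T coeZR x).exists_isMinOn
    ⟨l₀, (hK l₀ (hsupp l₀ hl₀ hl₀top.ne)).1 hl₀⟩ (by fun_prop : Continuous g).continuousOn
  let l := Finsupp.onFinset T w fun z hz => by_contra fun h => hz (hw.2.1 z h)
  have hlT : l.support ⊆ T := Finsupp.support_onFinset_subset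
  have hl : IsLocalCombination x l := (hK l hlT).2 hw
  refine ⟨l, hl, le_antisymm ?_ ?_⟩
  · rw [localConvexExt_eq_sInf]
    refine le_sInf ?_
    rintro _ ⟨l', hl', rfl⟩
    by_cases htop : weightedValue f l' = ⊤
    · exact htop ▸ le_top
    have hl'T := hsupp l' hl' htop
    rw [hval l hlT, hval l' hl'T]
    exact EReal.coe_le_coe_iff.2 (hmin ((hK l' hl'T).1 hl'))
  · rw [localConvexExt_eq_sInf]
    exact sInf_le ⟨l, hl, rfl⟩

lemma IsLocalCombination.le_of_mem_support {m : ℝ} (hm : ∀ z, (m : EReal) ≤ f z)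
    (hl : IsLocalCombination x l) (hv : weightedValue f l ≤ m) :
    ∀ z ∈ l.support, f z ≤ m := by
  have hbot : ∀ z, f z ≠ ⊥ := fun z => ne_bot_of_le_ne_bot (EReal.coe_ne_bot m) (hm z)
  have hdom := hl.ne_top_of_mem_support hbot (ne_top_of_le_ne_top (EReal.coe_ne_top m) hv)
  have hf : ∀ z ∈ l.support, f z = (f z).toReal := fun z hz =>
    (EReal.coe_toReal (hdom z hz) (hbot z)).symm
  have hm' : ∀ z ∈ l.support, m ≤ (f z).toReal := fun z hz =>
    EReal.coe_le_coe_iff.1 (hf z hz ▸ hm z)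
  rw [weightedValue_eq_coe_sum hbot hdom subset_rfl, EReal.coe_le_coe_iff] at hv
  have hsum : ∑ z ∈ l.support, l z * ((f z).toReal - m) = 0 := by
    refine le_antisymm ?_ (sum_nonneg fun z hz => mul_nonneg (hl.1 z) (sub_nonneg.2 (hm' z hz)))
    have h1 : ∑ z ∈ l.support, l z = 1 := hl.2.2.1
    calc ∑ z ∈ l.support, l z * ((f z).toReal - m)
        = ∑ z ∈ l.support, l z * (f z).toReal - m := by
          simp only [mul_sub, sum_sub_distrib, ← sum_mul, h1, one_mul]
      _ ≤ 0 := by linarith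
  intro z hz
  have hterm := (sum_eq_zero_iff_of_nonneg fun z hz =>
    mul_nonneg (hl.1 z) (sub_nonneg.2 (hm' z hz))).1 hsum z hz
  have hfz : (f z).toReal = m := by
    rcases mul_eq_zero.1 hterm with h | h
    · exact absurd h (Finsupp.mem_support_iff.1 hz)
    · linarith
  rw [hf z hz, hfz]

end LocalConvexExt

theorem stmt16 {n : ℕ} (f : (Fin n → ℤ) → EReal) (hbot : ∀ z, f z ≠ ⊥)
    (hf : IntegrallyConvexFn f)
    (x : Fin n → ℤ) (hx : f x ≠ ⊤) (hmin : ∀ y, f x ≤ f y) :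
    IntegrallyConvexSet {z : Fin n → ℤ | ∀ y, f z ≤ f y} := by
  set m := (f x).toReal
  have hfx : f x = m := (EReal.coe_toReal hx (hbot x)).symm
  have hm : ∀ z, (m : EReal) ≤ f z := hfx ▸ hmin
  have hargmin : {z : Fin n → ℤ | ∀ y, f z ≤ f y} = {z | f z ≤ m} :=
    Set.ext fun z => ⟨fun h => hfx ▸ h x, fun h y => h.trans (hm y)⟩
  rw [hargmin]
  intro x₀ hx₀
  have hle : localConvexExt f x₀ ≤ m := by
    refine convexHull_min ?_ (hf.convex_setOf_le_coe m) hx₀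
    rintro _ ⟨z, hz, rfl⟩
    exact (localConvexExt_coeZR_le f z).trans hz
  obtain ⟨l, hl, hlv⟩ := exists_isLocalCombination_weightedValue_eq hbot
    (ne_top_of_le_ne_top (EReal.coe_ne_top m) hle)
  exact hl.mem_convexHull (hl.le_of_mem_support hm (hlv.trans_le hle))
end
end

section
/- Let f: ℤⁿ → ℤ ∪ {+∞} be an integer-valued integrally convex function. Then for every x ∈ dom f the subdifferential ∂f(x) = {p ∈ ℝⁿ : f(y) − f(x) ≥ ⟨p, y − x⟩ for all y ∈ ℤⁿ} contains an integer vector. -/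
noncomputable section

def zToE (a : WithTop ℤ) : EReal := WithTop.recTopCoe ⊤ (fun k => ((k : ℝ) : EReal)) a

/-!
Induction on the dimension. Write `x = (x', c)` and let `p'` be an integer subgradient at `x'` of
the slice `u ↦ f (u, c)`. An integer `q` makes `(p', q)` a subgradient at `x` on the box
`{y | ∀ i, |y i - x i| ≤ 1}` as soon as it lies between integer lower bounds coming from the slice
`c - 1` and integer upper bounds coming from the slice `c + 1`. These bounds are compatible: the
midpoint of a point of slice `c - 1` and a point of slice `c + 1` lies in slice `c`, where the
local convex extension is bounded below by the affine minorant given by `p'`.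

A local subgradient of an integrally convex function is global: with `N = ∑ i, |y i - x i|`, every
integer neighbour of `x + (y - x) / N` lies in the box around `x`, so the local inequalities bound
the convex extension there from below, and convexity along the segment `[x, y]` carries the
bound to `y`.
-/

open Finset

lemma EReal.coe_finset_sum_s18 {α : Type*} (s : Finset α) (g : α → ℝ) :
    ((∑ z ∈ s, g z : ℝ) : EReal) = ∑ z ∈ s, (g z : EReal) :=
  map_sum (⟨⟨Real.toEReal, EReal.coe_zero⟩, EReal.coe_add⟩ : ℝ →+ EReal) _ _

lemma EReal.coe_add_le_of_le_convexComb {a s b : ℝ} {v : EReal} (hb : 0 < b)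
    (h : ((a + b * s : ℝ) : EReal) ≤ ((1 - b : ℝ) : EReal) * a + (b : EReal) * v) :
    (a : EReal) + s ≤ v := by
  induction v using EReal.rec with
  | bot =>
    rw [EReal.coe_mul_bot_of_pos hb, EReal.add_bot] at h
    exact absurd h (EReal.bot_lt_coe _).not_ge
  | coe v =>
    rw [← EReal.coe_mul, ← EReal.coe_mul, ← EReal.coe_add, EReal.coe_le_coe_iff] at h
    rw [← EReal.coe_add, EReal.coe_le_coe_iff]
    exact le_of_mul_le_mul_left (by linarith) hb
  | top => exact le_top

lemma Int.eq_of_abs_cast_sub_lt_one {a b : ℤ} (h : |(a : ℝ) - b| < 1) : a = b := by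
  have : |a - b| < 1 := by exact_mod_cast h
  rw [abs_lt] at this
  omega

lemma Int.abs_sub_le_one_of_abs_cast_sub {a b : ℤ} {ξ : ℝ} (ha : |ξ - a| < 1)
    (hb : |ξ - b| ≤ 1) : |a - b| ≤ 1 := by
  have h : |(a : ℝ) - b| < 2 := by
    calc |(a : ℝ) - b| ≤ |(a : ℝ) - ξ| + |ξ - b| := abs_sub_le _ _ _
      _ < 2 := by rw [abs_sub_comm]; linarith
  have : |a - b| < 2 := by exact_mod_cast h
  rw [abs_lt] at this
  rw [abs_le]
  omega

lemma Int.exists_between_of_bdd {L U : Set ℤ} (hL : BddAbove L) (hU : BddBelow U)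
    (h : ∀ s ∈ L, ∀ t ∈ U, s ≤ t) : ∃ q, (∀ s ∈ L, s ≤ q) ∧ ∀ t ∈ U, q ≤ t := by
  rcases L.eq_empty_or_nonempty with rfl | hLne
  · obtain ⟨q, hq⟩ := hU
    exact ⟨q, by simp, fun t ht => hq ht⟩
  · exact ⟨sSup L, fun s hs => le_csSup hL hs, fun t ht => csSup_le hLne fun s hs => h s hs t ht⟩

lemma Fin.snoc_sub_snoc {n : ℕ} {α : Type*} [Sub α] (u v : Fin n → α) (a b : α) :
    (Fin.snoc u a : Fin (n + 1) → α) - Fin.snoc v b = Fin.snoc (u - v) (a - b) := by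
  ext i
  refine Fin.lastCases ?_ (fun j => ?_) i <;> simp

lemma Fin.snoc_dotProduct_snoc {n : ℕ} {α : Type*} [CommSemiring α] (u v : Fin n → α) (a b : α) :
    (Fin.snoc u a : Fin (n + 1) → α) ⬝ᵥ Fin.snoc v b = u ⬝ᵥ v + a * b := by
  simp [dotProduct, Fin.sum_univ_castSucc]

lemma zToE_add_le_zToE_iff (a b : WithTop ℤ) (k : ℤ) :
    zToE a + ((k : ℝ) : EReal) ≤ zToE b ↔ a + k ≤ b := by
  induction a using WithTop.recTopCoe with
  | top => induction b using WithTop.recTopCoe <;> simp [zToE]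
  | coe a =>
    induction b using WithTop.recTopCoe with
    | top => simp [zToE]
    | coe b =>
      change ((a : ℝ) : EReal) + ((k : ℝ) : EReal) ≤ ((b : ℝ) : EReal) ↔ _
      norm_cast

section IntegerPoints

variable {n : ℕ}

lemma coeZR_sub (y x : Fin n → ℤ) : coeZR (y - x) = coeZR y - coeZR x := by
  ext i
  simp [coeZR]

lemma intCast_dotProduct_sub (p y x : Fin n → ℤ) :
    ((p ⬝ᵥ (y - x) : ℤ) : ℝ) = coeZR p ⬝ᵥ (coeZR y - coeZR x) := by
  rw [← coeZR_sub]
  exact RingHom.map_dotProduct (Int.castRingHom ℝ) p (y - x)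

lemma coeZR_snoc (z : Fin n → ℤ) (r : ℤ) :
    coeZR (Fin.snoc z r : Fin (n + 1) → ℤ) = Fin.snoc (coeZR z) (r : ℝ) := by
  ext i
  refine Fin.lastCases ?_ (fun j => ?_) i <;> simp [coeZR]

lemma finite_setOf_abs_sub_le_one (x : Fin n → ℤ) :
    {y : Fin n → ℤ | ∀ i, |y i - x i| ≤ 1}.Finite := by
  refine (Set.Finite.pi fun i => Set.finite_Icc (x i - 1) (x i + 1)).subset fun y hy i _ => ?_
  have := abs_le.1 (hy i)
  exact ⟨by linarith, by linarith⟩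

end IntegerPoints

section LocalConvexExtension

variable {n : ℕ}

lemma mem_intNbhd_coeZR {z w : Fin n → ℤ} : w ∈ IntNbhd (coeZR z) ↔ w = z :=
  ⟨fun h => funext fun i => (Int.eq_of_abs_cast_sub_lt_one (h i)).symm,
    by rintro rfl i; simp [coeZR]⟩

lemma localConvexExt_coeZR (F : (Fin n → ℤ) → EReal) (z : Fin n → ℤ) :
    localConvexExt F (coeZR z) = F z := by
  apply le_antisymm
  · refine sInf_le ⟨Finsupp.single z 1, fun w => ?_, fun w hw => ?_, ?_, ?_, ?_⟩
    · rw [Finsupp.single_apply]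
      split_ifs <;> norm_num
    · rw [mem_intNbhd_coeZR, ← Finset.mem_singleton]
      exact Finsupp.support_single_subset hw
    · simp
    · simp
    · simp
  · refine le_sInf ?_
    rintro _ ⟨l, -, hlN, hl1, -, rfl⟩
    have hl : l = Finsupp.single z (l z) := Finsupp.support_subset_singleton.1 fun w hw =>
      Finset.mem_singleton.2 (mem_intNbhd_coeZR.1 (hlN w hw))
    rw [hl, Finsupp.sum_single_index rfl] at hl1
    rw [hl, hl1]
    simp

lemma affine_le_localConvexExt (F : (Fin n → ℤ) → EReal) {ξ : Fin n → ℝ} (a : ℝ)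
    (p x₀ : Fin n → ℝ) (h : ∀ w ∈ IntNbhd ξ, ((a + p ⬝ᵥ (coeZR w - x₀) : ℝ) : EReal) ≤ F w) :
    ((a + p ⬝ᵥ (ξ - x₀) : ℝ) : EReal) ≤ localConvexExt F ξ := by
  refine le_sInf ?_
  rintro _ ⟨l, hl0, hlN, hl1, hlξ, rfl⟩
  have hbary : ∑ z ∈ l.support, l z * (a + p ⬝ᵥ (coeZR z - x₀)) = a + p ⬝ᵥ (ξ - x₀) := by
    rw [← hlξ]
    simp only [Finsupp.sum] at hl1 ⊢
    simp only [dotProduct_sub, dotProduct_sum, dotProduct_smul, smul_eq_mul, mul_add, mul_sub,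
      sum_add_distrib, sum_sub_distrib, ← sum_mul, hl1]
    ring
  calc ((a + p ⬝ᵥ (ξ - x₀) : ℝ) : EReal)
      = ∑ z ∈ l.support, ((l z * (a + p ⬝ᵥ (coeZR z - x₀)) : ℝ) : EReal) := by
        rw [← hbary, EReal.coe_finset_sum_s18]
    _ ≤ ∑ z ∈ l.support, (l z : EReal) * F z := sum_le_sum fun z hz => by
        rw [EReal.coe_mul]
        exact mul_le_mul_of_nonneg_left (h z (hlN z hz)) (EReal.coe_nonneg.2 (hl0 z))

end LocalConvexExtension

section Slices

variable {n : ℕ}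

def snocEmbedding (c : ℤ) : (Fin n → ℤ) ↪ (Fin (n + 1) → ℤ) :=
  ⟨fun z => Fin.snoc z c, fun _ _ h => (Fin.snoc_injective2 h).1⟩

@[simp]
lemma snocEmbedding_apply (c : ℤ) (z : Fin n → ℤ) : snocEmbedding c z = Fin.snoc z c := rfl

lemma snoc_mem_intNbhd_snoc {ξ : Fin n → ℝ} {c : ℤ} {u : Fin n → ℤ} {r : ℤ} :
    (Fin.snoc u r : Fin (n + 1) → ℤ) ∈ IntNbhd (Fin.snoc ξ (c : ℝ)) ↔ u ∈ IntNbhd ξ ∧ r = c := by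
  simp only [IntNbhd, Set.mem_ofPred_eq, Fin.forall_fin_succ', Fin.snoc_castSucc, Fin.snoc_last]
  exact and_congr_right fun _ => ⟨fun h => (Int.eq_of_abs_cast_sub_lt_one h).symm,
    by rintro rfl; simp⟩

lemma finsupp_sum_smul_coeZR_snoc (l : (Fin n → ℤ) →₀ ℝ) (c : ℤ) :
    (l.sum fun z a => a • coeZR (Fin.snoc z c : Fin (n + 1) → ℤ))
      = Fin.snoc (l.sum fun z a => a • coeZR z) ((l.sum fun _ a => a) * c) := by
  ext i
  refine Fin.lastCases ?_ (fun j => ?_) i <;> simp [Finsupp.sum, coeZR, sum_mul]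

lemma localConvexExt_snoc (F : (Fin (n + 1) → ℤ) → EReal) (c : ℤ) (ξ : Fin n → ℝ) :
    localConvexExt (fun u => F (Fin.snoc u c)) ξ = localConvexExt F (Fin.snoc ξ (c : ℝ)) := by
  unfold localConvexExt
  congr 1
  ext v
  constructor
  · rintro ⟨l, hl0, hlN, hl1, hlξ, rfl⟩
    refine ⟨l.embDomain (snocEmbedding c), fun w => ?_, fun w hw => ?_, ?_, ?_, ?_⟩
    · by_cases hw : w ∈ Set.range (snocEmbedding c)
      · obtain ⟨z, rfl⟩ := hw
        rw [Finsupp.embDomain_apply_self]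
        exact hl0 z
      · rw [Finsupp.embDomain_of_notMem_range _ _ _ hw]
    · rw [Finsupp.support_embDomain, Finset.mem_map] at hw
      obtain ⟨z, hz, rfl⟩ := hw
      exact snoc_mem_intNbhd_snoc.2 ⟨hlN z hz, rfl⟩
    · rwa [Finsupp.sum_embDomain]
    · rw [Finsupp.sum_embDomain]
      simp only [snocEmbedding_apply]
      rw [finsupp_sum_smul_coeZR_snoc, hlξ, hl1, one_mul]
    · rw [Finsupp.sum_embDomain]
      rfl
  · rintro ⟨l, hl0, hlN, hl1, hlξ, rfl⟩
    have hrange : (l.support : Set (Fin (n + 1) → ℤ)) ⊆ Set.range (snocEmbedding c) :=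
        fun w hw => by
      have hw' := hlN w hw
      rw [← Fin.snoc_init_self w] at hw' ⊢
      rw [(snoc_mem_intNbhd_snoc.1 hw').2]
      exact ⟨_, rfl⟩
    obtain ⟨l', rfl⟩ : ∃ l' : (Fin n → ℤ) →₀ ℝ, l = l'.embDomain (snocEmbedding c) :=
      ⟨_, (Finsupp.embDomain_comapDomain hrange).symm⟩
    rw [Finsupp.sum_embDomain] at hl1 hlξ ⊢
    refine ⟨l', fun z => ?_, fun z hz => ?_, hl1, ?_, rfl⟩
    · simpa only [Finsupp.embDomain_apply_self] using hl0 (snocEmbedding c z)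
    · refine (snoc_mem_intNbhd_snoc (r := c).1 (hlN _ ?_)).1
      rw [Finsupp.support_embDomain, Finset.mem_map]
      exact ⟨z, hz, rfl⟩
    · simp only [snocEmbedding_apply, finsupp_sum_smul_coeZR_snoc] at hlξ
      exact (Fin.snoc_injective2 hlξ).1

lemma IntegrallyConvexFn.comp_snoc {F : (Fin (n + 1) → ℤ) → EReal} (hF : IntegrallyConvexFn F)
    (c : ℤ) : IntegrallyConvexFn (fun u => F (Fin.snoc u c)) := by
  intro ξ₁ ξ₂ a b ha hb hab
  have hsnoc : (Fin.snoc (a • ξ₁ + b • ξ₂) (c : ℝ) : Fin (n + 1) → ℝ)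
      = a • Fin.snoc ξ₁ (c : ℝ) + b • Fin.snoc ξ₂ (c : ℝ) := by
    ext i
    refine Fin.lastCases ?_ (fun j => ?_) i
    · simp [← add_mul, hab]
    · simp
  simp only [localConvexExt_snoc, hsnoc]
  exact hF _ _ a b ha hb hab

end Slices

section Subgradients

variable {n : ℕ}

def IsSubgradient (F : (Fin n → ℤ) → EReal) (x : Fin n → ℤ) (p : Fin n → ℝ) : Prop :=
  ∀ y, F x + ((p ⬝ᵥ (coeZR y - coeZR x) : ℝ) : EReal) ≤ F y

def IsLocalSubgradient (F : (Fin n → ℤ) → EReal) (x : Fin n → ℤ) (p : Fin n → ℝ) : Prop :=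
  ∀ y, (∀ i, |y i - x i| ≤ 1) → F x + ((p ⬝ᵥ (coeZR y - coeZR x) : ℝ) : EReal) ≤ F y

theorem IntegrallyConvexFn.isSubgradient_of_isLocalSubgradient {F : (Fin n → ℤ) → EReal}
    (hF : IntegrallyConvexFn F) {x : Fin n → ℤ} {a : ℝ} (hxa : F x = a) {p : Fin n → ℝ}
    (hp : IsLocalSubgradient F x p) : IsSubgradient F x p := by
  intro y
  rcases eq_or_ne y x with rfl | hyx
  · simp
  set N : ℤ := ∑ i, |y i - x i|
  have hN : ∀ i, |y i - x i| ≤ N := fun i =>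
    single_le_sum (fun j _ => abs_nonneg (y j - x j)) (mem_univ i)
  have hN1 : 1 ≤ N := by
    obtain ⟨i, hi⟩ := Function.ne_iff.1 hyx
    exact (Int.one_le_abs (sub_ne_zero.2 hi)).trans (hN i)
  set b : ℝ := (N : ℝ)⁻¹
  have hb0 : 0 < b := inv_pos.2 (by exact_mod_cast hN1.trans_lt' zero_lt_one)
  have hb1 : b ≤ 1 := inv_le_one_of_one_le₀ (by exact_mod_cast hN1)
  set Z : Fin n → ℝ := (1 - b) • coeZR x + b • coeZR y
  have hZ : Z - coeZR x = b • (coeZR y - coeZR x) := by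
    simp only [Z]
    module
  have hnbhd : ∀ w ∈ IntNbhd Z, ∀ i, |w i - x i| ≤ 1 := fun w hw i => by
    refine Int.abs_sub_le_one_of_abs_cast_sub (hw i) ?_
    have hZi : Z i - x i = b * (y i - x i) := congrFun hZ i
    rw [hZi, abs_mul, abs_of_pos hb0]
    calc b * |(y i : ℝ) - x i| ≤ b * N := by
          gcongr
          exact_mod_cast hN i
      _ = 1 := inv_mul_cancel₀ (by positivity)
  have hlow := affine_le_localConvexExt F a p (coeZR x) fun w hw => by
    rw [EReal.coe_add, ← hxa]
    exact hp w (hnbhd w hw)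
  have hconv := hF (coeZR x) (coeZR y) (1 - b) b (by linarith) hb0.le (by ring)
  rw [localConvexExt_coeZR, localConvexExt_coeZR, hxa] at hconv
  rw [hZ, dotProduct_smul, smul_eq_mul] at hlow
  rw [hxa]
  exact EReal.coe_add_le_of_le_convexComb hb0 (hlow.trans hconv)

theorem IntegrallyConvexFn.slice_midpoint_le {F : (Fin (n + 1) → ℤ) → EReal}
    (hF : IntegrallyConvexFn F) {x' : Fin n → ℤ} {c : ℤ} {a : ℝ} (ha : F (Fin.snoc x' c) = a)
    {p : Fin n → ℝ} (hp : IsSubgradient (fun u => F (Fin.snoc u c)) x' p) {u v : Fin n → ℤ}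
    {A B : ℝ} (hA : F (Fin.snoc u (c - 1)) = A) (hB : F (Fin.snoc v (c + 1)) = B) :
    2 * a + p ⬝ᵥ (coeZR u - coeZR x') + p ⬝ᵥ (coeZR v - coeZR x') ≤ A + B := by
  set ξ : Fin n → ℝ := (1 / 2 : ℝ) • (coeZR u + coeZR v)
  have hmid : (Fin.snoc ξ (c : ℝ) : Fin (n + 1) → ℝ)
      = (1 / 2 : ℝ) • coeZR (Fin.snoc u (c - 1) : Fin (n + 1) → ℤ)
        + (1 / 2 : ℝ) • coeZR (Fin.snoc v (c + 1) : Fin (n + 1) → ℤ) := by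
    rw [coeZR_snoc, coeZR_snoc]
    ext i
    refine Fin.lastCases ?_ (fun j => ?_) i
    · simp only [Fin.snoc_last, Pi.add_apply, Pi.smul_apply, smul_eq_mul]
      push_cast
      ring
    · simp [ξ]
  have hlow := affine_le_localConvexExt (fun u => F (Fin.snoc u c)) (ξ := ξ) a p (coeZR x')
    fun w _ => by
      rw [EReal.coe_add, ← ha]
      exact hp w
  have hconv := hF (coeZR (Fin.snoc u (c - 1))) (coeZR (Fin.snoc v (c + 1))) (1 / 2) (1 / 2)
    (by norm_num) (by norm_num) (by norm_num)
  rw [localConvexExt_coeZR, localConvexExt_coeZR, hA, hB, ← hmid, ← localConvexExt_snoc] at hconv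
  have h := hlow.trans hconv
  rw [← EReal.coe_mul, ← EReal.coe_mul, ← EReal.coe_add, EReal.coe_le_coe_iff] at h
  have hξ : p ⬝ᵥ (ξ - coeZR x')
      = (p ⬝ᵥ (coeZR u - coeZR x') + p ⬝ᵥ (coeZR v - coeZR x')) / 2 := by
    simp only [ξ, dotProduct_sub, dotProduct_smul, dotProduct_add, smul_eq_mul]
    ring
  linarith

theorem exists_int_between_outer_slices {f : (Fin (n + 1) → ℤ) → WithTop ℤ}
    (hf : IntegrallyConvexFn (fun z => zToE (f z))) {x' : Fin n → ℤ} {c fx : ℤ}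
    (hfx : f (Fin.snoc x' c) = fx) {p' : Fin n → ℤ}
    (hp' : IsSubgradient (fun u => zToE (f (Fin.snoc u c))) x' (coeZR p')) :
    ∃ q : ℤ, (∀ u, (∀ i, |u i - x' i| ≤ 1) → ∀ m : ℤ, f (Fin.snoc u (c - 1)) = m →
        fx + p' ⬝ᵥ (u - x') - m ≤ q) ∧
      ∀ v, (∀ i, |v i - x' i| ≤ 1) → ∀ m : ℤ, f (Fin.snoc v (c + 1)) = m →
        q ≤ m - fx - p' ⬝ᵥ (v - x') := by
  -- Restricting to the box `B` keeps `L` and `U` finite, so `q` exists even if one is empty.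
  set B := {u : Fin n → ℤ | ∀ i, |u i - x' i| ≤ 1}
  set L : Set ℤ := {s | ∃ u ∈ B, f (Fin.snoc u (c - 1)) = ↑(fx + p' ⬝ᵥ (u - x') - s)}
  set U : Set ℤ := {t | ∃ v ∈ B, f (Fin.snoc v (c + 1)) = ↑(fx + p' ⬝ᵥ (v - x') + t)}
  have hLU : ∀ s ∈ L, ∀ t ∈ U, s ≤ t := by
    rintro s ⟨u, -, hu⟩ t ⟨v, -, hv⟩
    have h := hf.slice_midpoint_le (a := fx) (by rw [hfx]; rfl) hp' (by rw [hu]; rfl)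
      (by rw [hv]; rfl)
    simp only [← intCast_dotProduct_sub] at h
    push_cast at h
    exact_mod_cast (by linarith : (s : ℝ) ≤ t)
  have hLfin : L.Finite := ((finite_setOf_abs_sub_le_one x').image fun u =>
      fx + p' ⬝ᵥ (u - x') - (f (Fin.snoc u (c - 1))).untopD 0).subset
    fun s ⟨u, hu, hfu⟩ => ⟨u, hu, by simp only [hfu, WithTop.untopD_coe]; ring⟩
  have hUfin : U.Finite := ((finite_setOf_abs_sub_le_one x').image fun v =>
      (f (Fin.snoc v (c + 1))).untopD 0 - fx - p' ⬝ᵥ (v - x')).subset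
    fun t ⟨v, hv, hfv⟩ => ⟨v, hv, by simp only [hfv, WithTop.untopD_coe]; ring⟩
  obtain ⟨q, hqL, hqU⟩ := Int.exists_between_of_bdd hLfin.bddAbove hUfin.bddBelow hLU
  exact ⟨q, fun u hu m hm => hqL _ ⟨u, hu, by rw [hm]; congr 1; ring⟩,
    fun v hv m hm => hqU _ ⟨v, hv, by rw [hm]; congr 1; ring⟩⟩

theorem exists_isLocalSubgradient_snoc {f : (Fin (n + 1) → ℤ) → WithTop ℤ}
    (hf : IntegrallyConvexFn (fun z => zToE (f z))) {x' : Fin n → ℤ} {c fx : ℤ}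
    (hfx : f (Fin.snoc x' c) = fx) {p' : Fin n → ℤ}
    (hp' : IsSubgradient (fun u => zToE (f (Fin.snoc u c))) x' (coeZR p')) :
    ∃ q : ℤ, IsLocalSubgradient (fun z => zToE (f z)) (Fin.snoc x' c) (coeZR (Fin.snoc p' q)) := by
  obtain ⟨q, hqL, hqU⟩ := exists_int_between_outer_slices hf hfx hp'
  have hlocal : ∀ u r, (∀ i, |u i - x' i| ≤ 1) → |r - c| ≤ 1 →
      ((fx + (p' ⬝ᵥ (u - x') + q * (r - c)) : ℤ) : WithTop ℤ) ≤ f (Fin.snoc u r) := by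
    intro u r hu hr
    obtain rfl | rfl | rfl : r = c - 1 ∨ r = c ∨ r = c + 1 := by
      rw [abs_le] at hr
      omega
    · induction hm : f (Fin.snoc u (c - 1)) using WithTop.recTopCoe with
      | top => exact le_top
      | coe m => exact WithTop.coe_le_coe.2 (by linarith [hqL u hu m hm])
    · rw [sub_self, mul_zero, add_zero]
      have h := hp' u
      rwa [← intCast_dotProduct_sub, zToE_add_le_zToE_iff, hfx, ← WithTop.coe_add] at h
    · induction hm : f (Fin.snoc u (c + 1)) using WithTop.recTopCoe with
      | top => exact le_top
      | coe m => exact WithTop.coe_le_coe.2 (by linarith [hqU u hu m hm])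
  refine ⟨q, fun w hw => ?_⟩
  rw [← intCast_dotProduct_sub, zToE_add_le_zToE_iff, ← Fin.snoc_init_self w, Fin.snoc_sub_snoc,
    Fin.snoc_dotProduct_snoc, hfx, ← WithTop.coe_add]
  exact hlocal _ _ (fun i => by simpa [Fin.init] using hw i.castSucc)
    (by simpa using hw (Fin.last n))

theorem exists_int_isSubgradient (f : (Fin n → ℤ) → WithTop ℤ)
    (hf : IntegrallyConvexFn (fun z => zToE (f z))) {x : Fin n → ℤ} (hx : f x ≠ ⊤) :
    ∃ p : Fin n → ℤ, IsSubgradient (fun z => zToE (f z)) x (coeZR p) := by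
  induction n with
  | zero => exact ⟨0, fun y => by simp [Subsingleton.elim y x]⟩
  | succ n ih =>
    obtain ⟨fx, hfx⟩ := WithTop.ne_top_iff_exists.1 hx
    rw [← Fin.snoc_init_self x] at hfx ⊢
    obtain ⟨p', hp'⟩ := ih _ (hf.comp_snoc (x (Fin.last n))) (x := Fin.init x)
      (by rw [← hfx]; exact WithTop.coe_ne_top)
    obtain ⟨q, hq⟩ := exists_isLocalSubgradient_snoc hf hfx.symm hp'
    exact ⟨_, hf.isSubgradient_of_isLocalSubgradient (by rw [← hfx]; rfl) hq⟩

end Subgradients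

theorem stmt18 {n : ℕ} (f : (Fin n → ℤ) → WithTop ℤ)
    (hf : IntegrallyConvexFn (fun z => zToE (f z)))
    (x : Fin n → ℤ) (hx : f x ≠ ⊤) :
    ∃ p : Fin n → ℝ, (∀ i, ∃ k : ℤ, p i = (k : ℝ)) ∧
      ∀ y : Fin n → ℤ,
        zToE (f x) + ((∑ i, p i * ((y i : ℝ) - (x i : ℝ)) : ℝ) : EReal) ≤ zToE (f y) := by
  obtain ⟨p, hp⟩ := exists_int_isSubgradient f hf hx
  exact ⟨coeZR p, fun i => ⟨p i, rfl⟩, hp⟩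
end
end
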